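/- Assume the Y structure, and let d ∈ {0,1} be such that P(D=d | X=x, Y=y) > 0 for all x, y ∈ {0,1} (equivalently, p_{d|1}·p_{C=1|xy} + p_{d|0}·p_{C=0|xy} > 0 for all x, y). Then the conditional odds ratio of Y on X given D=d satisfies [ P(Y=1 | X=1, D=d) / P(Y=0 | X=1, D=d) ] / [ P(Y=1 | X=0, D=d) / P(Y=0 | X=0, D=d) ] = [ ( p_{d|1} − p_{d|0} )·( p_{d|1}·p_{C=1|00}·p_{C=1|11} − p_{d|0}·p_{C=0|00}·p_{C=0|11} ) + p_{d|1}·p_{d|0} ] / [ ( p_{d|1} − p_{d|0} )·( p_{d|1}·p_{C=1|10}·p_{C=1|01} − p_{d|0}·p_{C=0|10}·p_{C=0|01} ) + p_{d|1}·p_{d|0} ]. -/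
import Mathlib


open MeasureTheory ProbabilityTheory

variable {Ω : Type*} [MeasurableSpace Ω]

/-- The event that the random variable `X` takes the value `x`. -/
def ev (X : Ω → ℝ) (x : ℝ) : Set Ω := {ω | X ω = x}

/-- The probability of an event, as a real number. -/
noncomputable def pr (P : Measure Ω) (s : Set Ω) : ℝ := (P s).toReal

/-- The conditional probability `P(s | t)`, as a real number. -/
noncomputable def cpr (P : Measure Ω) (s t : Set Ω) : ℝ := pr (P[|t]) s

/-- The covariance of two real-valued random variables. -/
noncomputable def rcov (P : Measure Ω) (X Y : Ω → ℝ) : ℝ :=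
  ∫ ω, (X ω - ∫ ω', X ω' ∂P) * (Y ω - ∫ ω', Y ω' ∂P) ∂P

/-- The conditional covariance of two real-valued random variables given an event. -/
noncomputable def covCond (P : Measure Ω) (X Y : Ω → ℝ) (t : Set Ω) : ℝ :=
  rcov (P[|t]) X Y

/-- The conditional variance of a real-valued random variable given an event. -/
noncomputable def varCond (P : Measure Ω) (X : Ω → ℝ) (t : Set Ω) : ℝ :=
  covCond P X X t

/-- A measurable `{0,1}`-valued random variable. -/
def IsBin (X : Ω → ℝ) : Prop := Measurable X ∧ ∀ ω, X ω = 0 ∨ X ω = 1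

lemma ev_mble {X : Ω → ℝ} (hX : IsBin X) (x : ℝ) : MeasurableSet (ev X x) :=
  hX.1 (measurableSet_singleton x)

lemma pr_nonneg (P : Measure Ω) (s : Set Ω) : 0 ≤ pr P s := ENNReal.toReal_nonneg

lemma pr_mono (P : Measure Ω) [IsFiniteMeasure P] {s t : Set Ω} (h : s ⊆ t) :
    pr P s ≤ pr P t :=
  ENNReal.toReal_mono (measure_ne_top P t) (measure_mono h)

lemma cpr_eq (P : Measure Ω) [IsFiniteMeasure P] {t : Set Ω} (ht : MeasurableSet t) (s : Set Ω) :
    cpr P s t = pr P (t ∩ s) / pr P t := by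
  unfold cpr pr
  rw [cond_apply ht, ENNReal.toReal_mul, ENNReal.toReal_inv, inv_mul_eq_div]

lemma pr_split (P : Measure Ω) [IsFiniteMeasure P] {C : Ω → ℝ} (hC : IsBin C) (s : Set Ω) :
    pr P s = pr P (s ∩ ev C 0) + pr P (s ∩ ev C 1) := by
  have h := measure_inter_add_diff (μ := P) s (ev_mble hC 1)
  have hdiff : s \ ev C 1 = s ∩ ev C 0 := by
    ext ω
    simp only [Set.mem_diff, Set.mem_inter_iff, ev, Set.mem_setOf_eq]
    rcases hC.2 ω with h0 | h1
    · constructor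
      · rintro ⟨hs, _⟩; exact ⟨hs, h0⟩
      · rintro ⟨hs, _⟩; exact ⟨hs, by rw [h0]; norm_num⟩
    · constructor
      · rintro ⟨hs, hne⟩; exact absurd h1 hne
      · rintro ⟨hs, h0⟩; rw [h1] at h0; norm_num at h0
  rw [hdiff] at h
  unfold pr
  rw [← h, ENNReal.toReal_add (measure_ne_top P _) (measure_ne_top P _)]
  ring

set_option maxHeartbeats 1000000 in
/-- Y-bias on the odds ratio scale, conditioning on `D = d`. -/
theorem Y_bias_or (P : Measure Ω) [IsProbabilityMeasure P]
    (X Y C D : Ω → ℝ) (hX : IsBin X) (hY : IsBin Y) (hC : IsBin C) (hD : IsBin D)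
    (hX1 : 0 < pr P (ev X 1)) (hX1' : pr P (ev X 1) < 1)
    (hY1 : 0 < pr P (ev Y 1)) (hY1' : pr P (ev Y 1) < 1)
    (hfact : ∀ x y γ d : ℝ, (x = 0 ∨ x = 1) → (y = 0 ∨ y = 1) → (γ = 0 ∨ γ = 1) →
      (d = 0 ∨ d = 1) →
      pr P (ev X x ∩ ev Y y ∩ ev C γ ∩ ev D d) =
        pr P (ev X x) * pr P (ev Y y) * cpr P (ev C γ) (ev X x ∩ ev Y y) *
          cpr P (ev D d) (ev C γ))
    (d : ℝ) (hd : d = 0 ∨ d = 1)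
    (hpos : ∀ x y : ℝ, (x = 0 ∨ x = 1) → (y = 0 ∨ y = 1) →
      0 < cpr P (ev D d) (ev X x ∩ ev Y y)) :
    (cpr P (ev Y 1) (ev X 1 ∩ ev D d) / cpr P (ev Y 0) (ev X 1 ∩ ev D d)) /
        (cpr P (ev Y 1) (ev X 0 ∩ ev D d) / cpr P (ev Y 0) (ev X 0 ∩ ev D d)) =
      ((cpr P (ev D d) (ev C 1) - cpr P (ev D d) (ev C 0)) *
          (cpr P (ev D d) (ev C 1) * cpr P (ev C 1) (ev X 0 ∩ ev Y 0) *
              cpr P (ev C 1) (ev X 1 ∩ ev Y 1) -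
            cpr P (ev D d) (ev C 0) * cpr P (ev C 0) (ev X 0 ∩ ev Y 0) *
              cpr P (ev C 0) (ev X 1 ∩ ev Y 1)) +
        cpr P (ev D d) (ev C 1) * cpr P (ev D d) (ev C 0)) /
      ((cpr P (ev D d) (ev C 1) - cpr P (ev D d) (ev C 0)) *
          (cpr P (ev D d) (ev C 1) * cpr P (ev C 1) (ev X 1 ∩ ev Y 0) *
              cpr P (ev C 1) (ev X 0 ∩ ev Y 1) -
            cpr P (ev D d) (ev C 0) * cpr P (ev C 0) (ev X 1 ∩ ev Y 0) *
              cpr P (ev C 0) (ev X 0 ∩ ev Y 1)) +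
        cpr P (ev D d) (ev C 1) * cpr P (ev D d) (ev C 0)) := by
  have hmX := ev_mble hX
  have hmY := ev_mble hY
  have hmD := ev_mble hD
  -- marginals
  have hu : pr P (Set.univ : Set Ω) = 1 := by unfold pr; simp
  have hsX := pr_split P hX (Set.univ : Set Ω)
  rw [Set.univ_inter, Set.univ_inter, hu] at hsX
  have hsY := pr_split P hY (Set.univ : Set Ω)
  rw [Set.univ_inter, Set.univ_inter, hu] at hsY
  have hpx0 : 0 < pr P (ev X 0) := by linarith
  have hpy0 : 0 < pr P (ev Y 0) := by linarith
  -- key computation for each (x, y)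
  have key : ∀ x y : ℝ, (x = 0 ∨ x = 1) → (y = 0 ∨ y = 1) →
      pr P (ev X x ∩ ev Y y ∩ ev D d)
        = pr P (ev X x) * pr P (ev Y y) *
          (cpr P (ev C 0) (ev X x ∩ ev Y y) * cpr P (ev D d) (ev C 0)
            + cpr P (ev C 1) (ev X x ∩ ev Y y) * cpr P (ev D d) (ev C 1)) ∧
      0 < pr P (ev X x ∩ ev Y y ∩ ev D d) ∧
      cpr P (ev C 0) (ev X x ∩ ev Y y) + cpr P (ev C 1) (ev X x ∩ ev Y y) = 1 := by
    intro x y hx hy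
    have hposm : 0 < pr P (ev X x ∩ ev Y y ∩ ev D d) := by
      have h := hpos x y hx hy
      rw [cpr_eq P ((hmX x).inter (hmY y))] at h
      by_contra hle
      push_neg at hle
      have h0 : pr P (ev X x ∩ ev Y y ∩ ev D d) = 0 :=
        le_antisymm hle (pr_nonneg P _)
      rw [h0] at h
      simp at h
    have hxy : 0 < pr P (ev X x ∩ ev Y y) :=
      lt_of_lt_of_le hposm (pr_mono P Set.inter_subset_left)
    refine ⟨?_, hposm, ?_⟩
    · have hsplit := pr_split P hC (ev X x ∩ ev Y y ∩ ev D d)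
      have e0 : ev X x ∩ ev Y y ∩ ev D d ∩ ev C 0 = ev X x ∩ ev Y y ∩ ev C 0 ∩ ev D d := by
        ext ω; simp only [Set.mem_inter_iff]; tauto
      have e1 : ev X x ∩ ev Y y ∩ ev D d ∩ ev C 1 = ev X x ∩ ev Y y ∩ ev C 1 ∩ ev D d := by
        ext ω; simp only [Set.mem_inter_iff]; tauto
      rw [e0, e1, hfact x y 0 d hx hy (Or.inl rfl) hd,
        hfact x y 1 d hx hy (Or.inr rfl) hd] at hsplit
      rw [hsplit]; ring
    · have hsplit := pr_split P hC (ev X x ∩ ev Y y)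
      rw [cpr_eq P ((hmX x).inter (hmY y)), cpr_eq P ((hmX x).inter (hmY y))]
      field_simp
      linarith
  obtain ⟨e00, p00, s00⟩ := key 0 0 (Or.inl rfl) (Or.inl rfl)
  obtain ⟨e01, p01, s01⟩ := key 0 1 (Or.inl rfl) (Or.inr rfl)
  obtain ⟨e10, p10, s10⟩ := key 1 0 (Or.inr rfl) (Or.inl rfl)
  obtain ⟨e11, p11, s11⟩ := key 1 1 (Or.inr rfl) (Or.inr rfl)
  -- the conditional probabilities on the LHS
  have hL : ∀ x : ℝ,
      cpr P (ev Y 1) (ev X x ∩ ev D d)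
        = pr P (ev X x ∩ ev Y 1 ∩ ev D d) /
          (pr P (ev X x ∩ ev Y 0 ∩ ev D d) + pr P (ev X x ∩ ev Y 1 ∩ ev D d)) ∧
      cpr P (ev Y 0) (ev X x ∩ ev D d)
        = pr P (ev X x ∩ ev Y 0 ∩ ev D d) /
          (pr P (ev X x ∩ ev Y 0 ∩ ev D d) + pr P (ev X x ∩ ev Y 1 ∩ ev D d)) := by
    intro x
    have hden := pr_split P hY (ev X x ∩ ev D d)
    have f0 : ev X x ∩ ev D d ∩ ev Y 0 = ev X x ∩ ev Y 0 ∩ ev D d := by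
      ext ω; simp only [Set.mem_inter_iff]; tauto
    have f1 : ev X x ∩ ev D d ∩ ev Y 1 = ev X x ∩ ev Y 1 ∩ ev D d := by
      ext ω; simp only [Set.mem_inter_iff]; tauto
    rw [f0, f1] at hden
    constructor
    · rw [cpr_eq P ((hmX x).inter (hmD d)), f1, hden]
    · rw [cpr_eq P ((hmX x).inter (hmD d)), f0, hden]
  rw [(hL 1).1, (hL 1).2, (hL 0).1, (hL 0).2]
  -- abbreviations
  set px0 := pr P (ev X 0) with hdefpx0
  set px1 := pr P (ev X 1) with hdefpx1
  set py0 := pr P (ev Y 0) with hdefpy0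
  set py1 := pr P (ev Y 1) with hdefpy1
  set q0 := cpr P (ev D d) (ev C 0) with hdefq0
  set q1 := cpr P (ev D d) (ev C 1) with hdefq1
  set c00 := cpr P (ev C 1) (ev X 0 ∩ ev Y 0) with hdefc00
  set c01 := cpr P (ev C 1) (ev X 0 ∩ ev Y 1) with hdefc01
  set c10 := cpr P (ev C 1) (ev X 1 ∩ ev Y 0) with hdefc10
  set c11 := cpr P (ev C 1) (ev X 1 ∩ ev Y 1) with hdefc11
  set b00 := cpr P (ev C 0) (ev X 0 ∩ ev Y 0) with hdefb00
  set b01 := cpr P (ev C 0) (ev X 0 ∩ ev Y 1) with hdefb01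
  set b10 := cpr P (ev C 0) (ev X 1 ∩ ev Y 0) with hdefb10
  set b11 := cpr P (ev C 0) (ev X 1 ∩ ev Y 1) with hdefb11
  set m00 := pr P (ev X 0 ∩ ev Y 0 ∩ ev D d) with hdefm00
  set m01 := pr P (ev X 0 ∩ ev Y 1 ∩ ev D d) with hdefm01
  set m10 := pr P (ev X 1 ∩ ev Y 0 ∩ ev D d) with hdefm10
  set m11 := pr P (ev X 1 ∩ ev Y 1 ∩ ev D d) with hdefm11
  -- b = 1 - c
  have hb00 : b00 = 1 - c00 := by linarith
  have hb01 : b01 = 1 - c01 := by linarith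
  have hb10 : b10 = 1 - c10 := by linarith
  have hb11 : b11 = 1 - c11 := by linarith
  simp only [hb00, hb01, hb10, hb11] at e00 e01 e10 e11 ⊢
  -- positivity of the mixed propensities
  have hap : ∀ m p a : ℝ, 0 < m → 0 < p → m = p * a → 0 < a := by
    intro m p a hm hp he
    by_contra hle
    push_neg at hle
    have h2 : p * a ≤ p * 0 := mul_le_mul_of_nonneg_left hle hp.le
    rw [mul_zero] at h2
    linarith
  have a00pos := hap _ _ _ p00 (mul_pos hpx0 hpy0) e00
  have a01pos := hap _ _ _ p01 (mul_pos hpx0 hY1) e01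
  have a10pos := hap _ _ _ p10 (mul_pos hX1 hpy0) e10
  have a11pos := hap _ _ _ p11 (mul_pos hX1 hY1) e11
  -- reduce LHS to (m11 * m00) / (m10 * m01)
  have hS1 : (0:ℝ) < m10 + m11 := by linarith
  have hS0 : (0:ℝ) < m00 + m01 := by linarith
  have hS1' : m10 + m11 ≠ 0 := ne_of_gt hS1
  have hS0' : m00 + m01 ≠ 0 := ne_of_gt hS0
  have hm10' : m10 ≠ 0 := ne_of_gt p10
  have hm01' : m01 ≠ 0 := ne_of_gt p01
  have hm00' : m00 ≠ 0 := ne_of_gt p00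
  have hLHS : (m11 / (m10 + m11)) / (m10 / (m10 + m11)) /
      ((m01 / (m00 + m01)) / (m00 / (m00 + m01))) = (m11 * m00) / (m10 * m01) := by
    field_simp
  have hNum : (q1 - q0) * (q1 * c00 * c11 - q0 * (1 - c00) * (1 - c11)) + q1 * q0
      = ((1 - c00) * q0 + c00 * q1) * ((1 - c11) * q0 + c11 * q1) := by ring
  have hDen : (q1 - q0) * (q1 * c10 * c01 - q0 * (1 - c10) * (1 - c01)) + q1 * q0
      = ((1 - c10) * q0 + c10 * q1) * ((1 - c01) * q0 + c01 * q1) := by ring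
  rw [hLHS, e00, e01, e10, e11, hNum, hDen]
  rw [div_eq_div_iff
    (ne_of_gt (mul_pos (mul_pos (mul_pos hX1 hpy0) a10pos)
      (mul_pos (mul_pos hpx0 hY1) a01pos)))
    (ne_of_gt (mul_pos a10pos a01pos))]
  ring
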